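/- The number of connected components of the extended quotient 𝕋̂ⁿ/S_n (for the coordinate-permutation action of S_n on 𝕋ⁿ) equals the number of partitions of n. -/
import Mathlib


/-- The coordinate-permutation action of `S_n` on the torus `𝕋ⁿ`. -/
instance circlePermAction (n : ℕ) : MulAction (Equiv.Perm (Fin n)) (Fin n → Circle) where
  smul σ z := fun i => z (σ⁻¹ i)
  one_smul z := funext fun i => by
    show z ((1 : Equiv.Perm (Fin n))⁻¹ i) = z i
    simp
  mul_smul σ τ z := funext fun i => by
    show z ((σ * τ)⁻¹ i) = z (τ⁻¹ (σ⁻¹ i))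
    rw [mul_inv_rev, Equiv.Perm.mul_apply]

/-- `S_n` is given the discrete topology. -/
instance (n : ℕ) : TopologicalSpace (Equiv.Perm (Fin n)) := ⊥

instance (n : ℕ) : DiscreteTopology (Equiv.Perm (Fin n)) := ⟨rfl⟩

/-- The "extended" space `X̂ = {(γ, z) : γ • z = z} ⊆ S_n × 𝕋ⁿ`. -/
abbrev ExtTorus (n : ℕ) : Type :=
  {p : Equiv.Perm (Fin n) × (Fin n → Circle) // p.1 • p.2 = p.2}

/-- The action `g • (γ, z) = (gγg⁻¹, g • z)` of `S_n` on `X̂`. -/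
instance extTorusAction (n : ℕ) : MulAction (Equiv.Perm (Fin n)) (ExtTorus n) where
  smul g p := ⟨(g * p.1.1 * g⁻¹, g • p.1.2), by
    show (g * p.1.1 * g⁻¹) • (g • p.1.2) = g • p.1.2
    rw [mul_smul, mul_smul, inv_smul_smul, p.2]⟩
  one_smul p := Subtype.ext (by
    show ((1 : Equiv.Perm (Fin n)) * p.1.1 * (1 : Equiv.Perm (Fin n))⁻¹,
      (1 : Equiv.Perm (Fin n)) • p.1.2) = p.1
    simp)
  mul_smul g h p := Subtype.ext (by
    show ((g * h) * p.1.1 * (g * h)⁻¹, (g * h) • p.1.2)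
        = (g * (h * p.1.1 * h⁻¹) * g⁻¹, g • h • p.1.2)
    rw [Prod.mk.injEq]
    exact ⟨by group, mul_smul g h p.1.2⟩)

/-- The extended quotient `𝕋̂ⁿ/S_n` with the quotient topology. -/
abbrev ExtQuotTorus (n : ℕ) : Type :=
  Quotient (MulAction.orbitRel (Equiv.Perm (Fin n)) (ExtTorus n))

/-! ### Auxiliary material -/

instance (n : ℕ) : TopologicalSpace (Nat.Partition n) := ⊥
instance (n : ℕ) : DiscreteTopology (Nat.Partition n) := ⟨rfl⟩

lemma circle_smul_apply {n : ℕ} (σ : Equiv.Perm (Fin n)) (z : Fin n → Circle) (i : Fin n) :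
    (σ • z) i = z (σ⁻¹ i) := rfl

/-- `Circle` is a connected space. -/
instance : ConnectedSpace Circle :=
  (Function.Surjective.connectedSpace (f := Circle.exp)
    (fun z => ⟨Complex.arg z, Circle.exp_arg z⟩) Circle.exp.continuous)

/-- If `z` is fixed by `γ` then `z` is constant on `⟨γ⟩`-orbits. -/
lemma fixed_const_on_orbit {n : ℕ} {γ : Equiv.Perm (Fin n)} {z : Fin n → Circle}
    (hz : γ • z = z) (g : Equiv.Perm (Fin n)) (hg : g ∈ Subgroup.zpowers γ)
    (i : Fin n) : z (g i) = z i := by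
  have hmem : g⁻¹ ∈ MulAction.stabilizer (Equiv.Perm (Fin n)) z := by
    have : Subgroup.zpowers γ ≤ MulAction.stabilizer (Equiv.Perm (Fin n)) z := by
      rw [Subgroup.zpowers_le]
      exact hz
    exact (MulAction.stabilizer (Equiv.Perm (Fin n)) z).inv_mem (this hg)
  have := congrFun (hmem : g⁻¹ • z = z) i
  rw [circle_smul_apply] at this
  simpa using this

/-- Two points of the extended torus with the *same* permutation give points of
the extended quotient lying in the same connected component. -/
lemma same_component_of_eq_perm {n : ℕ} (γ : Equiv.Perm (Fin n))
    (z w : Fin n → Circle) (hz : γ • z = z) (hw : γ • w = w) :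
    ConnectedComponents.mk
        (Quotient.mk (MulAction.orbitRel (Equiv.Perm (Fin n)) (ExtTorus n))
          (⟨(γ, z), hz⟩ : ExtTorus n))
      = ConnectedComponents.mk
        (Quotient.mk (MulAction.orbitRel (Equiv.Perm (Fin n)) (ExtTorus n))
          (⟨(γ, w), hw⟩ : ExtTorus n)) := by
  classical
  -- quotient of `Fin n` by orbits of `⟨γ⟩`
  set Q := Quotient (MulAction.orbitRel (Subgroup.zpowers γ) (Fin n)) with hQ
  -- the map `(Q → Circle) → (Fin n → Circle)`
  set F : (Q → Circle) → (Fin n → Circle) := fun v i =>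
    v (Quotient.mk (MulAction.orbitRel (Subgroup.zpowers γ) (Fin n)) i) with hF
  have hFcont : Continuous F := continuous_pi fun i => continuous_apply _
  have hFfix : ∀ v : Q → Circle, γ • F v = F v := by
    intro v
    funext i
    rw [circle_smul_apply, hF]
    have : (Quotient.mk (MulAction.orbitRel (Subgroup.zpowers γ) (Fin n)) (γ⁻¹ i))
        = Quotient.mk (MulAction.orbitRel (Subgroup.zpowers γ) (Fin n)) i := by
      refine Quotient.sound ?_
      refine ⟨⟨γ⁻¹, Subgroup.inv_mem _ (Subgroup.mem_zpowers γ)⟩, rfl⟩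
    show v (Quotient.mk (MulAction.orbitRel (Subgroup.zpowers γ) (Fin n)) (γ⁻¹ i))
      = v (Quotient.mk (MulAction.orbitRel (Subgroup.zpowers γ) (Fin n)) i)
    rw [this]
  -- the connected set in the extended quotient
  set G : (Q → Circle) → ExtQuotTorus n := fun v =>
    Quotient.mk (MulAction.orbitRel (Equiv.Perm (Fin n)) (ExtTorus n))
      (⟨(γ, F v), hFfix v⟩ : ExtTorus n) with hG
  have hGcont : Continuous G := by
    refine Continuous.comp continuous_quotient_mk' ?_
    exact Continuous.subtype_mk (continuous_const.prodMk hFcont) _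
  have hconn : IsPreconnected (Set.range G) :=
    (isConnected_range hGcont).isPreconnected
  -- every fixed point is in the range of `F`
  have hrange : ∀ (u : Fin n → Circle) (hu : γ • u = u),
      (Quotient.mk (MulAction.orbitRel (Equiv.Perm (Fin n)) (ExtTorus n))
        (⟨(γ, u), hu⟩ : ExtTorus n)) ∈ Set.range G := by
    intro u hu
    refine ⟨fun q => u q.out, ?_⟩
    have hFu : F (fun q => u q.out) = u := by
      funext i
      show u (Quotient.mk (MulAction.orbitRel (Subgroup.zpowers γ) (Fin n)) i).out = u i
      obtain ⟨⟨g, hg⟩, hgi⟩ :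
          (Quotient.mk (MulAction.orbitRel (Subgroup.zpowers γ) (Fin n)) i).out
            ∈ MulAction.orbit (Subgroup.zpowers γ) i :=
        MulAction.orbitRel_apply.mp (Quotient.exact (Quotient.out_eq
          (Quotient.mk (MulAction.orbitRel (Subgroup.zpowers γ) (Fin n)) i)))
      rw [← hgi]
      exact fixed_const_on_orbit hu g hg i
    rw [hG]
    exact congrArg _ (Subtype.ext (by
      show (γ, F (fun q => u q.out)) = (γ, u)
      rw [hFu]))
  have h1 := hrange z hz
  have h2 := hrange w hw
  rw [ConnectedComponents.coe_eq_coe]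
  exact connectedComponent_eq ((hconn.subset_connectedComponent h1) h2)

/-- the number of connected components of the extended quotient `𝕋̂ⁿ/S_n`
equals the number of partitions of `n`. -/
theorem card_connectedComponents_extended_quotient_torus (n : ℕ) :
    Nat.card (ConnectedComponents (ExtQuotTorus n)) = Nat.card (Nat.Partition n) := by
  classical
  -- the partition-valued invariant
  set f : ExtTorus n → Nat.Partition (Fintype.card (Fin n)) :=
    fun p => p.1.1.partition with hf
  have hfconst : ∀ (a b : ExtTorus n),
      (MulAction.orbitRel (Equiv.Perm (Fin n)) (ExtTorus n)).r a b → f a = f b := by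
    intro a b hab
    obtain ⟨g, hg⟩ := hab
    have h1 : a.1.1 = g * b.1.1 * g⁻¹ := by rw [← hg]; rfl
    have : IsConj b.1.1 a.1.1 := isConj_iff.2 ⟨g, h1.symm⟩
    exact (Equiv.Perm.partition_eq_of_isConj.1 this).symm
  set φ : ExtQuotTorus n → Nat.Partition (Fintype.card (Fin n)) :=
    Quotient.lift f hfconst with hφ
  have hφcont : Continuous φ := by
    have h1 : Continuous (fun p : ExtTorus n => p.1.1) :=
      (continuous_fst.comp continuous_subtype_val)
    have h2 : Continuous f := by
      rw [hf]
      exact Continuous.comp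
        (continuous_of_discreteTopology
          (f := fun γ : Equiv.Perm (Fin n) => γ.partition)) h1
    exact h2.quotient_lift _
  set ψ : ConnectedComponents (ExtQuotTorus n) → Nat.Partition (Fintype.card (Fin n)) :=
    hφcont.connectedComponentsLift with hψ
  have hinj : Function.Injective ψ := by
    intro c1 c2 hc
    obtain ⟨x1, rfl⟩ := ConnectedComponents.surjective_coe c1
    obtain ⟨x2, rfl⟩ := ConnectedComponents.surjective_coe c2
    obtain ⟨p1, rfl⟩ := Quotient.exists_rep x1
    obtain ⟨p2, rfl⟩ := Quotient.exists_rep x2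
    rw [hψ, hφcont.connectedComponentsLift_apply_coe,
      hφcont.connectedComponentsLift_apply_coe] at hc
    have hpart : p1.1.1.partition = p2.1.1.partition := hc
    have hconj : IsConj p1.1.1 p2.1.1 := Equiv.Perm.partition_eq_of_isConj.2 hpart
    obtain ⟨g, hg⟩ := isConj_iff.1 hconj
    -- replace `p1` by `g • p1`, which has the same image in the quotient
    set p1' : ExtTorus n := g • p1 with hp1'
    have horb : (Quotient.mk (MulAction.orbitRel (Equiv.Perm (Fin n)) (ExtTorus n)) p1)
        = Quotient.mk (MulAction.orbitRel (Equiv.Perm (Fin n)) (ExtTorus n)) p1' := by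
      refine Quotient.sound ?_
      refine ⟨g⁻¹, ?_⟩
      show g⁻¹ • (g • p1) = p1
      exact inv_smul_smul g p1
    have hfst : p1'.1.1 = p2.1.1 := hg
    have hfix1 : p2.1.1 • p1'.1.2 = p1'.1.2 := by rw [← hfst]; exact p1'.2
    have heq1 : p1' = (⟨(p2.1.1, p1'.1.2), hfix1⟩ : ExtTorus n) :=
      Subtype.ext (Prod.ext hfst rfl)
    rw [horb, heq1]
    exact same_component_of_eq_perm p2.1.1 p1'.1.2 p2.1.2 hfix1 p2.2
  have hsurj : Function.Surjective ψ := by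
    intro P
    -- find a permutation with the right partition
    set m : Multiset ℕ := P.parts.filter (fun a => 2 ≤ a) with hm
    set t : Multiset ℕ := P.parts.filter (fun a => ¬ 2 ≤ a) with ht
    have hsplit : m + t = P.parts := by
      rw [hm, ht]; exact Multiset.filter_add_not _ _
    have hsum : m.sum + t.sum = Fintype.card (Fin n) := by
      rw [← Multiset.sum_add, hsplit, P.parts_sum]
    obtain ⟨g, hg⟩ : ∃ g : Equiv.Perm (Fin n), g.cycleType = m := by
      rw [Equiv.Perm.exists_with_cycleType_iff]
      constructor
      · omega
      · intro a ha
        rw [hm, Multiset.mem_filter] at ha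
        exact ha.2
    have hgpart : g.partition = P := by
      have hsupp : g.support.card = m.sum := by
        rw [← Equiv.Perm.sum_cycleType, hg]
      have hones : t = Multiset.replicate (Fintype.card (Fin n) - m.sum) 1 := by
        have hall1 : ∀ a ∈ t, a = 1 := by
          intro a ha
          rw [ht, Multiset.mem_filter] at ha
          have h1 : 0 < a := P.parts_pos ha.1
          have h2 : ¬ 2 ≤ a := ha.2
          omega
        have hrep : t = Multiset.replicate (Multiset.card t) 1 :=
          Multiset.eq_replicate_card.2 hall1
        have htsum : t.sum = Multiset.card t := by
          conv_lhs => rw [hrep]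
          simp
        have hcard : Multiset.card t = Fintype.card (Fin n) - m.sum := by omega
        rw [hrep, hcard]
      refine Nat.Partition.ext ?_
      rw [Equiv.Perm.parts_partition, hg, hsupp, ← hones, hsplit]
    -- the corresponding fixed point
    have hfix : g • (fun _ : Fin n => (1 : Circle)) = (fun _ : Fin n => (1 : Circle)) := by
      funext i; rw [circle_smul_apply]
    refine ⟨ConnectedComponents.mk
      (Quotient.mk (MulAction.orbitRel (Equiv.Perm (Fin n)) (ExtTorus n))
        (⟨(g, fun _ => 1), hfix⟩ : ExtTorus n)), ?_⟩
    rw [hψ, hφcont.connectedComponentsLift_apply_coe]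
    exact hgpart
  have hcard : Nat.card (ConnectedComponents (ExtQuotTorus n))
      = Nat.card (Nat.Partition (Fintype.card (Fin n))) :=
    Nat.card_eq_of_bijective ψ ⟨hinj, hsurj⟩
  rw [hcard, Fintype.card_fin]
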